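/- Diagonal matrix elements: under the hypotheses of the previous lemma, for every j ∈ ℕ, ⟨b₀ e_j, e_j⟩ = (1/π)∫₀^π b₀(x)dx + r_j(b₀) with |r_j(b₀)| ≤ c(δ)‖b₀‖_{H^{r+1+δ}_x}/(2ω_j)^r. -/

import Mathlib

/-!
On `(0, π)` one has `e_j(x)² sin² x = sin²(ω_j x) = 1/2 - cos(2 ω_j x)/2`, so the deviation of the
diagonal matrix element from the mean is `-(1/π) ∫ b₀(x) cos(2 ω_j x) dx`. Product-to-sum and the
recurrence `e_{n+2} = e_n + 2 cos((n+2)x)` show that `∫₀^π e_i(x) cos(2 m x) dx` is `π` when `i`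
is even with `i ≥ 2m`, and `0` otherwise. Hence the deviation is the tail sum
`-∑_{i even, i ≥ 2ω_j} b_i`, which Cauchy–Schwarz against the weights `(i+1)^{r+1+δ}` bounds by
`‖b₀‖ (2ω_j)^{-r} (∑ (i+1)^{-1-2δ})^{1/2}`. Summation and integration commute because
`|e_i(x)| ≤ √(i+1) / √(sin x)` and `1/√(sin x)` is integrable on `(0, π)`.
-/

/-- The spherically symmetric eigenfunctions `e_j(x) = sin((j+1)x)/sin x` on `(0,π)`. -/
noncomputable def sphEig (j : ℕ) (x : ℝ) : ℝ := Real.sin (((j : ℝ) + 1) * x) / Real.sin x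

/-- The embedding constant `c(δ) = √(2π) (∑_j (j+1)^{-1-2δ})^{1/2}` of `H^{r+1+δ}_x` into
`H^r(S¹,dx)`. -/
noncomputable def embConst (δ : ℝ) : ℝ :=
  Real.sqrt (2 * Real.pi) * Real.sqrt (∑' j : ℕ, ((j : ℝ) + 1) ^ (-(1 + 2 * δ)))

open Real MeasureTheory Set

theorem summable_and_tsum_abs_mul_le_sqrt_mul_sqrt {ι : Type*} {f g : ι → ℝ}
    (hf : Summable fun i => f i ^ 2) (hg : Summable fun i => g i ^ 2) :
    (Summable fun i => |f i * g i|) ∧ ∑' i, |f i * g i| ≤ √(∑' i, f i ^ 2) * √(∑' i, g i ^ 2) := by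
  have h := Real.summable_and_inner_le_Lp_mul_Lq_tsum_of_nonneg Real.HolderConjugate.two_two
    (f := fun i => |f i|) (g := fun i => |g i|) (fun i => abs_nonneg _) (fun i => abs_nonneg _)
    (by simpa using hf) (by simpa using hg)
  simpa [abs_mul, sqrt_eq_rpow] using h

theorem abs_tsum_mul_le_sqrt_mul_sqrt {ι : Type*} {f g : ι → ℝ}
    (hf : Summable fun i => f i ^ 2) (hg : Summable fun i => g i ^ 2) :
    |∑' i, f i * g i| ≤ √(∑' i, f i ^ 2) * √(∑' i, g i ^ 2) := by
  obtain ⟨habs, hle⟩ := summable_and_tsum_abs_mul_le_sqrt_mul_sqrt hf hg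
  refine le_trans ?_ hle
  simpa only [Real.norm_eq_abs] using norm_tsum_le_tsum_norm (f := fun i => f i * g i) habs

theorem summable_nat_add_one_rpow {p : ℝ} (hp : p < -1) :
    Summable fun i : ℕ => ((i : ℝ) + 1) ^ p := by
  simpa using (summable_nat_add_iff 1).mpr (Real.summable_nat_rpow.mpr hp)

theorem rpow_sq_eq_rpow_two_mul {x : ℝ} (hx : 0 ≤ x) (t : ℝ) : (x ^ t) ^ 2 = x ^ (2 * t) := by
  rw [← rpow_mul_natCast hx, mul_comm]; norm_num

theorem natCast_add_one_rpow_sq (i : ℕ) (t : ℝ) :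
    (((i : ℝ) + 1) ^ t) ^ 2 = ((i : ℝ) + 1) ^ (2 * t) :=
  rpow_sq_eq_rpow_two_mul (by positivity) t

theorem summable_abs_mul_sqrt_of_summable_sq_mul_rpow {bc : ℕ → ℝ} {s : ℝ} (hs : 1 < s)
    (hsum : Summable fun i : ℕ => bc i ^ 2 * ((i : ℝ) + 1) ^ (2 * s)) :
    Summable fun i : ℕ => |bc i| * √((i : ℝ) + 1) := by
  have hweight : Summable fun i : ℕ => (((i : ℝ) + 1) ^ (1 / 2 - s)) ^ 2 := by
    simp only [natCast_add_one_rpow_sq]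
    exact summable_nat_add_one_rpow (by linarith)
  refine (summable_and_tsum_abs_mul_le_sqrt_mul_sqrt
    (f := fun i => bc i * ((i : ℝ) + 1) ^ s) ?_ hweight).1.congr fun i => ?_
  · simpa only [mul_pow, natCast_add_one_rpow_sq] using hsum
  · have hi : (0 : ℝ) < i + 1 := by positivity
    rw [mul_assoc, ← rpow_add hi, add_sub_cancel, abs_mul, abs_of_pos (rpow_pos_of_pos hi _),
      sqrt_eq_rpow]

noncomputable def sinRatio (n : ℕ) (x : ℝ) : ℝ := sin (n * x) / sin x

theorem sphEig_eq_sinRatio (j : ℕ) : sphEig j = sinRatio (j + 1) := by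
  ext x
  simp [sphEig, sinRatio]

theorem abs_sin_nat_mul_le (n : ℕ) (x : ℝ) : |sin (n * x)| ≤ n * |sin x| := by
  induction n with
  | zero => simp
  | succ n ih =>
    calc |sin ((n + 1 : ℕ) * x)| = |sin (n * x) * cos x + cos (n * x) * sin x| := by
          push_cast; rw [add_mul, one_mul, sin_add]
      _ ≤ |sin (n * x)| * |cos x| + |cos (n * x)| * |sin x| := by
          simpa only [abs_mul] using abs_add_le (sin (n * x) * cos x) (cos (n * x) * sin x)
      _ ≤ n * |sin x| * 1 + 1 * |sin x| := by
          gcongr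
          exacts [abs_cos_le_one _, abs_cos_le_one _]
      _ = (n + 1 : ℕ) * |sin x| := by push_cast; ring

theorem abs_sinRatio_le (n : ℕ) (x : ℝ) : |sinRatio n x| ≤ n := by
  rcases eq_or_ne (sin x) 0 with h | h
  · simp [sinRatio, h]
  · rw [sinRatio, abs_div, div_le_iff₀ (abs_pos.mpr h)]
    exact abs_sin_nat_mul_le n x

theorem abs_sinRatio_le_sqrt (n : ℕ) (x : ℝ) : |sinRatio n x| ≤ √n * √|sin x|⁻¹ := by
  have hinv : |sinRatio n x| ≤ |sin x|⁻¹ := by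
    rw [sinRatio, abs_div, div_eq_mul_inv]
    exact mul_le_of_le_one_left (by positivity) (abs_sin_le_one _)
  rw [← sqrt_mul (Nat.cast_nonneg n), ← sqrt_sq (abs_nonneg (sinRatio n x)), sq]
  exact sqrt_le_sqrt (mul_le_mul (abs_sinRatio_le n x) hinv (abs_nonneg _) (Nat.cast_nonneg n))

theorem measurable_sinRatio (n : ℕ) : Measurable (sinRatio n) := by
  unfold sinRatio; fun_prop

theorem integrableOn_sinRatio_mul {w : ℝ → ℝ}
    (hw : AEStronglyMeasurable w (volume.restrict (Ioo 0 π))) (hw1 : ∀ x, |w x| ≤ 1) (n : ℕ) :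
    IntegrableOn (fun x => sinRatio n x * w x) (Ioo 0 π) := by
  refine Integrable.mono' (integrable_const (n : ℝ))
    ((measurable_sinRatio n).aestronglyMeasurable.mul hw) (ae_of_all _ fun x => ?_)
  rw [norm_mul, Real.norm_eq_abs, Real.norm_eq_abs]
  exact mul_le_of_le_one_right (abs_nonneg _) (hw1 x) |>.trans (abs_sinRatio_le n x)

theorem integrableOn_sinRatio (n : ℕ) : IntegrableOn (sinRatio n) (Ioo 0 π) := by
  simpa only [mul_one] using
    integrableOn_sinRatio_mul (w := fun _ => 1) aestronglyMeasurable_const (fun _ => by simp) n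

theorem sinRatio_add_two {x : ℝ} (hx : sin x ≠ 0) (n : ℕ) :
    sinRatio (n + 2) x = sinRatio n x + 2 * cos ((n + 1 : ℕ) * x) := by
  have h : sin ((n + 2 : ℕ) * x) = sin (n * x) + 2 * cos ((n + 1 : ℕ) * x) * sin x := by
    have e1 : ((n + 2 : ℕ) : ℝ) * x = (n + 1 : ℕ) * x + x := by push_cast; ring
    have e2 : (n : ℝ) * x = (n + 1 : ℕ) * x - x := by push_cast; ring
    rw [e1, e2, sin_add, sin_sub]; ring
  rw [sinRatio, sinRatio, h, add_div, mul_div_assoc, div_self hx, mul_one]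

theorem integral_cos_nat_mul_Ioo {m : ℕ} (hm : m ≠ 0) : ∫ x in Ioo 0 π, cos (m * x) = 0 := by
  rw [← integral_Ioc_eq_integral_Ioo, ← intervalIntegral.integral_of_le pi_pos.le,
    intervalIntegral.integral_comp_mul_left _ (Nat.cast_ne_zero.mpr hm), integral_cos]
  simp [sin_nat_mul_pi]

theorem integral_sinRatio : ∀ n : ℕ, ∫ x in Ioo 0 π, sinRatio n x = if Odd n then π else 0
  | 0 => by simp [sinRatio]
  | 1 => by
    rw [setIntegral_congr_fun measurableSet_Ioo (g := fun _ => 1) fun x hx =>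
      by simp [sinRatio, (sin_pos_of_pos_of_lt_pi hx.1 hx.2).ne']]
    simp [pi_pos.le]
  | n + 2 => by
    have hcos : IntegrableOn (fun x => cos ((n + 1 : ℕ) * x)) (Ioo 0 π) :=
      (Continuous.integrableOn_Icc (by fun_prop)).mono_set Ioo_subset_Icc_self
    rw [setIntegral_congr_fun measurableSet_Ioo fun x hx =>
        sinRatio_add_two (sin_pos_of_pos_of_lt_pi hx.1 hx.2).ne' n,
      integral_add (integrableOn_sinRatio n) (hcos.const_mul 2), integral_const_mul,
      integral_cos_nat_mul_Ioo n.succ_ne_zero, integral_sinRatio n]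
    simp [Nat.odd_add]

theorem sinRatio_mul_cos_of_le {c d : ℕ} (hdc : d ≤ c) (x : ℝ) :
    sinRatio c x * cos (d * x) = (sinRatio (c + d) x + sinRatio (c - d) x) / 2 := by
  simp only [sinRatio, Nat.cast_add, Nat.cast_sub hdc, add_mul, sub_mul, sin_add, sin_sub]
  ring

theorem sinRatio_mul_cos_of_ge {c d : ℕ} (hcd : c ≤ d) (x : ℝ) :
    sinRatio c x * cos (d * x) = (sinRatio (c + d) x - sinRatio (d - c) x) / 2 := by
  simp only [sinRatio, Nat.cast_add, Nat.cast_sub hcd, add_mul, sub_mul, sin_add, sin_sub]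
  ring

theorem integral_sinRatio_mul_cos (c d : ℕ) :
    ∫ x in Ioo 0 π, sinRatio c x * cos (d * x) = if Odd (c + d) ∧ d < c then π else 0 := by
  rcases le_total d c with h | h
  · rw [integral_congr_ae (ae_of_all _ (sinRatio_mul_cos_of_le h)), integral_div,
      integral_add (integrableOn_sinRatio _) (integrableOn_sinRatio _), integral_sinRatio,
      integral_sinRatio]
    have hpar : Odd (c - d) ↔ Odd (c + d) := by rw [Nat.odd_sub h, Nat.odd_add]
    simp only [hpar]
    by_cases hodd : Odd (c + d)
    · have : d < c := h.lt_of_ne (by rintro rfl; exact Nat.not_odd_iff_even.mpr ⟨d, rfl⟩ hodd)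
      simp [hodd, this]
    · simp [hodd]
  · rw [integral_congr_ae (ae_of_all _ (sinRatio_mul_cos_of_ge h)), integral_div,
      integral_sub (integrableOn_sinRatio _) (integrableOn_sinRatio _), integral_sinRatio,
      integral_sinRatio]
    have hpar : Odd (d - c) ↔ Odd (c + d) := by rw [Nat.odd_sub h, add_comm, Nat.odd_add]
    simp [hpar, h.not_gt]

theorem integral_sphEig_mul_cos_two_mul (i m : ℕ) :
    ∫ x in Ioo 0 π, sphEig i x * cos (2 * m * x) = if Even i ∧ 2 * m ≤ i then π else 0 := by
  have h := integral_sinRatio_mul_cos (i + 1) (2 * m)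
  have hpar : Odd (i + 1 + 2 * m) ↔ Even i := by simp [Nat.odd_add, Nat.odd_add_one]
  simp only [hpar, Nat.lt_succ_iff, Nat.cast_mul, Nat.cast_ofNat] at h
  rw [sphEig_eq_sinRatio, h]

theorem integral_sphEig (i : ℕ) : ∫ x in Ioo 0 π, sphEig i x = if Even i then π else 0 := by
  rw [sphEig_eq_sinRatio, integral_sinRatio]
  simp [Nat.odd_add_one]

theorem integral_sphEig_mul_sin_sq (i j : ℕ) :
    ∫ x in Ioo 0 π, sphEig i x * sin ((j + 1) * x) ^ 2
      = ((if Even i then π else 0) - if Even i ∧ 2 * (j + 1) ≤ i then π else 0) / 2 := by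
  have hsq (x : ℝ) : sphEig i x * sin ((j + 1) * x) ^ 2
      = (sphEig i x - sphEig i x * cos (2 * (j + 1 : ℕ) * x)) / 2 := by
    rw [sin_sq_eq_half_sub]; push_cast; ring_nf
  have hcos : IntegrableOn (fun x => sphEig i x * cos (2 * (j + 1 : ℕ) * x)) (Ioo 0 π) := by
    rw [sphEig_eq_sinRatio]
    exact integrableOn_sinRatio_mul (by fun_prop) (fun _ => abs_cos_le_one _) _
  rw [integral_congr_ae (ae_of_all _ hsq), integral_div,
    integral_sub (sphEig_eq_sinRatio i ▸ integrableOn_sinRatio _) hcos, integral_sphEig,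
    integral_sphEig_mul_cos_two_mul]

theorem sqrt_inv_abs_sin_le {x : ℝ} (hx0 : 0 < x) (hx : x ≤ π / 2) :
    √|sin x|⁻¹ ≤ √(π / 2) * x ^ (-(1 / 2) : ℝ) := by
  have hjordan : 2 / π * x ≤ |sin x| := (mul_le_sin hx0.le hx).trans (le_abs_self _)
  have hinv : |sin x|⁻¹ ≤ π / 2 * x⁻¹ := by
    calc |sin x|⁻¹ ≤ (2 / π * x)⁻¹ := inv_anti₀ (by positivity) hjordan
      _ = π / 2 * x⁻¹ := by rw [mul_inv, inv_div]
  rw [rpow_neg hx0.le, ← sqrt_eq_rpow, ← sqrt_inv, ← sqrt_mul (by positivity)]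
  exact sqrt_le_sqrt hinv

theorem intervalIntegrable_sqrt_inv_abs_sin :
    IntervalIntegrable (fun x => √|sin x|⁻¹) volume 0 π := by
  have hmeas : AEStronglyMeasurable (fun x => √|sin x|⁻¹) (volume.restrict (uIoc 0 (π / 2))) := by
    fun_prop
  have hleft : IntervalIntegrable (fun x => √|sin x|⁻¹) volume 0 (π / 2) := by
    refine (((intervalIntegral.intervalIntegrable_rpow' (r := -(1 / 2)) (by norm_num)).const_mul
      √(π / 2))).mono_fun' hmeas ?_
    rw [uIoc_of_le (by positivity)]
    filter_upwards [ae_restrict_mem measurableSet_Ioc] with x hx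
    rw [Real.norm_of_nonneg (sqrt_nonneg _)]
    exact sqrt_inv_abs_sin_le hx.1 hx.2
  have hright : IntervalIntegrable (fun x => √|sin x|⁻¹) volume (π / 2) π := by
    have h := hleft.comp_sub_left π
    simp only [sin_pi_sub, sub_zero, sub_half] at h
    exact h.symm
  exact hleft.trans hright

theorem hasSum_integral_sphEig_series_mul {bc : ℕ → ℝ}
    (hbc : Summable fun i => |bc i| * √((i : ℝ) + 1)) {w : ℝ → ℝ}
    (hw : AEStronglyMeasurable w (volume.restrict (Ioo 0 π))) (hw1 : ∀ x, |w x| ≤ 1) :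
    HasSum (fun i => bc i * ∫ x in Ioo 0 π, sphEig i x * w x)
      (∫ x in Ioo 0 π, (∑' i, bc i * sphEig i x) * w x) := by
  set C := ∫ x in Ioo 0 π, √|sin x|⁻¹
  have hdom : IntegrableOn (fun x => √|sin x|⁻¹) (Ioo 0 π) :=
    intervalIntegrable_sqrt_inv_abs_sin.1.mono_set Ioo_subset_Ioc_self
  have hint (i : ℕ) : IntegrableOn (fun x => bc i * (sphEig i x * w x)) (Ioo 0 π) := by
    rw [sphEig_eq_sinRatio]
    exact (integrableOn_sinRatio_mul hw hw1 _).const_mul (bc i)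
  have hnorm (i : ℕ) :
      ∫ x in Ioo 0 π, ‖bc i * (sphEig i x * w x)‖ ≤ |bc i| * √((i : ℝ) + 1) * C := by
    rw [← integral_const_mul]
    refine integral_mono_of_nonneg (ae_of_all _ fun _ => norm_nonneg _) (hdom.const_mul _)
      (ae_of_all _ fun x => ?_)
    have he : |sphEig i x| ≤ √((i : ℝ) + 1) * √|sin x|⁻¹ := by
      simpa [sphEig_eq_sinRatio] using abs_sinRatio_le_sqrt (i + 1) x
    simp only [norm_mul, Real.norm_eq_abs, mul_assoc]
    exact mul_le_mul_of_nonneg_left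
      (mul_le_of_le_one_right (abs_nonneg _) (hw1 x) |>.trans he) (abs_nonneg _)
  have hsum : Summable fun i => ∫ x in Ioo 0 π, ‖bc i * (sphEig i x * w x)‖ :=
    (hbc.mul_right C).of_nonneg_of_le (fun _ => integral_nonneg fun _ => norm_nonneg _) hnorm
  have h := hasSum_integral_of_summable_integral_norm hint hsum
  simp only [integral_const_mul] at h
  have hseries (x : ℝ) : (∑' i, bc i * sphEig i x) * w x = ∑' i, bc i * (sphEig i x * w x) := by
    rw [← tsum_mul_right]; simp only [mul_assoc]
  simpa only [hseries] using h

theorem diagonal_sub_mean_eq_neg_tsum {b0 : ℝ → ℝ} {bc : ℕ → ℝ}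
    (hb : ∀ x ∈ Ioo 0 π, b0 x = ∑' i, bc i * sphEig i x)
    (hbc : Summable fun i => |bc i| * √((i : ℝ) + 1)) (j : ℕ) :
    (2 / π) * (∫ x in (0 : ℝ)..π, b0 x * sphEig j x * sphEig j x * sin x ^ 2)
        - (1 / π) * ∫ x in (0 : ℝ)..π, b0 x
      = -∑' i, if Even i ∧ 2 * (j + 1) ≤ i then bc i else 0 := by
  simp only [intervalIntegral.integral_of_le pi_pos.le, integral_Ioc_eq_integral_Ioo]
  have hdiag : HasSum
      (fun i =>
        bc i * (((if Even i then π else 0) - if Even i ∧ 2 * (j + 1) ≤ i then π else 0) / 2))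
      (∫ x in Ioo 0 π, b0 x * sphEig j x * sphEig j x * sin x ^ 2) := by
    rw [setIntegral_congr_fun measurableSet_Ioo (g := fun x => (∑' i, bc i * sphEig i x)
      * sin ((j + 1) * x) ^ 2) fun x hx => ?_]
    · have h := hasSum_integral_sphEig_series_mul (w := fun x => sin ((j + 1) * x) ^ 2) hbc
          (by fun_prop) (fun x => by simp [abs_sin_le_one])
      simp_rw [integral_sphEig_mul_sin_sq] at h
      exact h
    · have hsin : sin x ≠ 0 := (sin_pos_of_pos_of_lt_pi hx.1 hx.2).ne'
      have hsq : sphEig j x * sphEig j x * sin x ^ 2 = sin ((j + 1) * x) ^ 2 := by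
        rw [sphEig]; field_simp
      rw [hb x hx]
      linear_combination (∑' i, bc i * sphEig i x) * hsq
  have hmean : HasSum (fun i => bc i * if Even i then π else 0) (∫ x in Ioo 0 π, b0 x) := by
    rw [setIntegral_congr_fun measurableSet_Ioo (g := fun x => (∑' i, bc i * sphEig i x) * 1)
      fun x hx => by simp [hb x hx]]
    simpa only [mul_one, integral_sphEig] using
      hasSum_integral_sphEig_series_mul (w := fun _ => 1) hbc aestronglyMeasurable_const
        (fun _ => by simp)
  rw [← ((hdiag.mul_left (2 / π)).sub (hmean.mul_left (1 / π))).tsum_eq, ← tsum_neg]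
  congr 1 with i
  split_ifs <;> field_simp <;> ring

theorem sq_natCast_add_one_rpow_neg_le {r δ N : ℝ} (hr : 0 ≤ r) (hN : 0 < N) {i : ℕ}
    (hi : N ≤ i + 1) :
    (((i : ℝ) + 1) ^ (-(r + 1 + δ))) ^ 2 ≤ (N ^ r)⁻¹ ^ 2 * ((i : ℝ) + 1) ^ (-(1 + 2 * δ)) := by
  have hpos : (0 : ℝ) < i + 1 := by positivity
  have hscale : ((i : ℝ) + 1) ^ (-(2 * r)) ≤ (N ^ r)⁻¹ ^ 2 := by
    rw [← rpow_neg hN.le, rpow_sq_eq_rpow_two_mul hN.le, ← mul_neg]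
    exact rpow_le_rpow_of_nonpos hN hi (by linarith)
  have hdecay : ((i : ℝ) + 1) ^ (-(2 + 2 * δ)) ≤ ((i : ℝ) + 1) ^ (-(1 + 2 * δ)) :=
    rpow_le_rpow_of_exponent_le (by linarith [(i.cast_nonneg : (0 : ℝ) ≤ i)]) (by linarith)
  calc (((i : ℝ) + 1) ^ (-(r + 1 + δ))) ^ 2
      = ((i : ℝ) + 1) ^ (-(2 * r)) * ((i : ℝ) + 1) ^ (-(2 + 2 * δ)) := by
        rw [natCast_add_one_rpow_sq, ← rpow_add hpos]; ring_nf
    _ ≤ (N ^ r)⁻¹ ^ 2 * ((i : ℝ) + 1) ^ (-(1 + 2 * δ)) :=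
        mul_le_mul hscale hdecay (by positivity) (by positivity)

theorem abs_tsum_ite_tail_le {bc : ℕ → ℝ} {r δ N : ℝ} (hr : 0 ≤ r) (hδ : 0 < δ) (hN : 0 < N)
    (hsum : Summable fun i : ℕ => bc i ^ 2 * ((i : ℝ) + 1) ^ (2 * (r + 1 + δ)))
    (P : ℕ → Prop) [DecidablePred P] (hP : ∀ i, P i → N ≤ i + 1) :
    |∑' i, if P i then bc i else 0|
      ≤ √(∑' i : ℕ, ((i : ℝ) + 1) ^ (-(1 + 2 * δ)))
          * √(∑' i : ℕ, bc i ^ 2 * ((i : ℝ) + 1) ^ (2 * (r + 1 + δ))) / N ^ r := by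
  set f : ℕ → ℝ := fun i => bc i * ((i : ℝ) + 1) ^ (r + 1 + δ)
  set g : ℕ → ℝ := fun i => if P i then ((i : ℝ) + 1) ^ (-(r + 1 + δ)) else 0
  have hfg (i : ℕ) : f i * g i = if P i then bc i else 0 := by
    simp only [f, g]
    split_ifs
    · rw [mul_assoc, ← rpow_add (by positivity), add_neg_cancel, rpow_zero, mul_one]
    · rw [mul_zero]
  have hf : (fun i => f i ^ 2) = fun i => bc i ^ 2 * ((i : ℝ) + 1) ^ (2 * (r + 1 + δ)) := by
    ext i; simp only [f, mul_pow, natCast_add_one_rpow_sq]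
  have hg (i : ℕ) : g i ^ 2 ≤ (N ^ r)⁻¹ ^ 2 * ((i : ℝ) + 1) ^ (-(1 + 2 * δ)) := by
    simp only [g]
    split_ifs with hi
    · exact sq_natCast_add_one_rpow_neg_le hr hN (hP i hi)
    · rw [sq, zero_mul]; positivity
  have hzeta := summable_nat_add_one_rpow (p := -(1 + 2 * δ)) (by linarith)
  have hg_sum : Summable fun i => g i ^ 2 :=
    (hzeta.mul_left _).of_nonneg_of_le (fun _ => sq_nonneg _) hg
  calc |∑' i, if P i then bc i else 0| = |∑' i, f i * g i| := by rw [tsum_congr hfg]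
    _ ≤ √(∑' i, f i ^ 2) * √(∑' i, g i ^ 2) := abs_tsum_mul_le_sqrt_mul_sqrt (hf ▸ hsum) hg_sum
    _ ≤ √(∑' i, f i ^ 2) * √((N ^ r)⁻¹ ^ 2 * ∑' i : ℕ, ((i : ℝ) + 1) ^ (-(1 + 2 * δ))) := by
        rw [← tsum_mul_left]
        exact mul_le_mul_of_nonneg_left
          (sqrt_le_sqrt (hg_sum.tsum_le_tsum hg (hzeta.mul_left _))) (sqrt_nonneg _)
    _ = _ := by
        rw [hf, sqrt_mul (by positivity), sqrt_sq (by positivity)]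
        ring

/-- diagonal matrix elements: for `b₀ ∈ H^{r+1+δ}_x`, for every `j`,
`⟨b₀ e_j, e_j⟩ = (1/π)∫₀^π b₀(x)dx + r_j(b₀)` with
`|r_j(b₀)| ≤ c(δ) ‖b₀‖_{H^{r+1+δ}_x} / (2ω_j)^r`. -/
theorem stmt14 (r δ : ℝ) (hr : 0 ≤ r) (hδ : 0 < δ) (b0 : ℝ → ℝ) (bc : ℕ → ℝ)
    (hb : ∀ x ∈ Set.Ioo 0 Real.pi, b0 x = ∑' j : ℕ, bc j * sphEig j x)
    (hsum : Summable fun j : ℕ => bc j ^ 2 * ((j : ℝ) + 1) ^ (2 * (r + 1 + δ)))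
    (j : ℕ) :
    |(2 / Real.pi) * (∫ x in (0:ℝ)..Real.pi, b0 x * sphEig j x * sphEig j x * Real.sin x ^ 2)
        - (1 / Real.pi) * ∫ x in (0:ℝ)..Real.pi, b0 x|
      ≤ embConst δ *
          Real.sqrt (∑' i : ℕ, bc i ^ 2 * ((i : ℝ) + 1) ^ (2 * (r + 1 + δ))) /
          (2 * ((j : ℝ) + 1)) ^ r := by
  have hbc := summable_abs_mul_sqrt_of_summable_sq_mul_rpow (by linarith) hsum
  have htail : ∀ i : ℕ, Even i ∧ 2 * (j + 1) ≤ i → 2 * ((j : ℝ) + 1) ≤ i + 1 := fun i hi => by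
    have : (2 * (j + 1) : ℝ) ≤ i := by exact_mod_cast hi.2
    linarith
  rw [diagonal_sub_mean_eq_neg_tsum hb hbc j, abs_neg]
  refine (abs_tsum_ite_tail_le hr hδ (by positivity) hsum _ htail).trans ?_
  have h2pi : 1 ≤ √(2 * π) := one_le_sqrt.mpr (by linarith [pi_gt_three])
  rw [embConst]
  gcongr
  exact le_mul_of_one_le_left (sqrt_nonneg _) h2pi
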